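/- Let ℓ ≥ 1, n ≥ 1, and let m_1 ≥ m_2 ≥ … ≥ m_ℓ ≥ 1 be integers. Then the IC-index of the complete (n+ℓ)-partite graph K_{1(n),m_ℓ,m_{ℓ−1},…,m_2,m_1} = O_{m_1} ∨ O_{m_2} ∨ ⋯ ∨ O_{m_ℓ} ∨ K_n satisfies M(K_{1(n),m_ℓ,…,m_1}) ≥ 2^{m_1}(2^{m_2}(⋯(2^{m_ℓ}(2^n − 1) + 1)⋯) + 1) + 1. -/

import Mathlib

/-- The join `H₀ ∨ H₁` of two graphs: all edges of `H₀`, all edges of `H₁`, and all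
pairs with one endpoint in each. -/
def graphJoin {α β : Type*} (G : SimpleGraph α) (H : SimpleGraph β) :
    SimpleGraph (α ⊕ β) where
  Adj x y :=
    match x, y with
    | Sum.inl a, Sum.inl b => G.Adj a b
    | Sum.inr a, Sum.inr b => H.Adj a b
    | Sum.inl _, Sum.inr _ => True
    | Sum.inr _, Sum.inl _ => True
  symm := by
    refine ⟨?_⟩
    rintro (a | a) (b | b) h
    · exact G.adj_symm h
    · trivial
    · trivial
    · exact H.adj_symm h
  loopless := by
    refine ⟨?_⟩
    rintro (a | a) h
    · exact G.loopless.irrefl a h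
    · exact H.loopless.irrefl a h

/-- A coloring `f : V(G) → ℕ` (positive-valued) is an IC-coloring if every integer
`k` with `1 ≤ k ≤ f(G)` is the `f`-sum of some nonempty vertex subset inducing a
connected subgraph. -/
def IsICColoring {α : Type*} [Fintype α] (G : SimpleGraph α) (f : α → ℕ) : Prop :=
  (∀ v, 0 < f v) ∧
    ∀ k : ℕ, 1 ≤ k → k ≤ ∑ v, f v →
      ∃ S : Finset α, S.Nonempty ∧ (G.induce (S : Set α)).Connected ∧
        ∑ v ∈ S, f v = k

/-- The IC-index `M(G)`: the maximum of `f(G)` over all IC-colorings `f` of `G`. -/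
noncomputable def ICIndex {α : Type*} [Fintype α] (G : SimpleGraph α) : ℕ :=
  sSup {t | ∃ f : α → ℕ, IsICColoring G f ∧ ∑ v, f v = t}

/-- `K_{1(n),m} = O_m ∨ K_n`: the complete `(n+1)`-partite graph with `n` parts of
size one and one part (`V₀ = Fin m`, the left summand) of size `m`. -/
def K1nm (m n : ℕ) : SimpleGraph (Fin m ⊕ Fin n) :=
  graphJoin (⊥ : SimpleGraph (Fin m)) (⊤ : SimpleGraph (Fin n))

/-- Vertex type of `O_{m₁} ∨ O_{m₂} ∨ ⋯ ∨ O_{m_ℓ} ∨ K_n` for `ms = [m₁, …, m_ℓ]`. -/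
def multiJoinType : List ℕ → ℕ → Type
  | [], n => Fin n
  | m :: ms, n => Fin m ⊕ multiJoinType ms n

instance multiJoinType.fintype : (ms : List ℕ) → (n : ℕ) → Fintype (multiJoinType ms n)
  | [], n => inferInstanceAs (Fintype (Fin n))
  | m :: ms, n =>
      letI := multiJoinType.fintype ms n
      inferInstanceAs (Fintype (Fin m ⊕ multiJoinType ms n))

/-- The complete multipartite graph
`K_{1(n),m_ℓ,…,m₁} = O_{m₁} ∨ O_{m₂} ∨ ⋯ ∨ O_{m_ℓ} ∨ K_n` for `ms = [m₁, …, m_ℓ]`. -/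
def multiJoinGraph : (ms : List ℕ) → (n : ℕ) → SimpleGraph (multiJoinType ms n)
  | [], _ => ⊤
  | m :: ms, n => graphJoin (⊥ : SimpleGraph (Fin m)) (multiJoinGraph ms n)

/-- The nested lower bound `2^{m₁}(2^{m₂}(⋯(2^{m_ℓ}(2^n − 1) + 1)⋯) + 1) + 1`
for `ms = [m₁, …, m_ℓ]`. -/
def nestedBound : List ℕ → ℕ → ℕ
  | [], n => 2 ^ n - 1
  | m :: ms, n => 2 ^ m * nestedBound ms n + 1

/-!
Induct along `ms`, joining one independent set `O_{m+1}` at a time. If `f` is an IC-colouring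
of `H` with total `s > 0`, give the vertex `i ∈ {0, …, m}` of `O_{m+1}` the colour `2 ^ i * s`,
plus `1` on the top vertex `m`; the total becomes `2 ^ (m + 1) * s + 1`. A value `k ≤ s` is
realised inside `H`, the value `2 ^ m * s + 1` by the top vertex alone, and every other `k` as
`t * s + [2 ^ m ≤ t] + j` with `1 ≤ t < 2 ^ (m + 1)` and `1 ≤ j ≤ s`: the binary digits of `t`
pick new vertices (the top one exactly when `2 ^ m ≤ t`), `j` a connected set of `H`, and in a
join every vertex set meeting both sides is connected. The base `K_n` is coloured by
`1, 2, …, 2 ^ (n - 1)`.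
-/

open Finset SimpleGraph

section Join

variable {α β : Type*} {G : SimpleGraph α} {H : SimpleGraph β}

theorem graphJoin_induce_connected {s : Set (α ⊕ β)} {a : α} {b : β}
    (ha : Sum.inl a ∈ s) (hb : Sum.inr b ∈ s) : ((graphJoin G H).induce s).Connected := by
  have hub : ∀ x (hx : Sum.inl x ∈ s), ((graphJoin G H).induce s).Reachable ⟨_, hb⟩ ⟨_, hx⟩ :=
    fun _ _ => Adj.reachable trivial
  refine (connected_iff_exists_forall_reachable _).2 ⟨⟨_, hb⟩, ?_⟩
  rintro ⟨x | y, hx⟩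
  · exact hub x hx
  · exact (hub a ha).trans (Adj.reachable trivial)

theorem SimpleGraph.Connected.induce_inr_image {U : Set β} (hU : (H.induce U).Connected) :
    ((graphJoin G H).induce (Sum.inr '' U)).Connected :=
  hU.map (induceHom ⟨Sum.inr, id⟩ (Set.mapsTo_image _ _))
    (by rintro ⟨_, x, hx, rfl⟩; exact ⟨⟨x, hx⟩, rfl⟩)

end Join

namespace SimpleGraph

theorem connected_induce_singleton {V : Type*} (G : SimpleGraph V) (v : V) :
    (G.induce {v}).Connected :=
  (connected_iff _).2 ⟨.of_subsingleton, inferInstance⟩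

theorem connected_top_induce {V : Type*} {s : Set V} (hs : s.Nonempty) :
    ((⊤ : SimpleGraph V).induce s).Connected := by
  have : Nonempty s := hs.to_subtype
  rw [show (⊤ : SimpleGraph V).induce s = ⊤ by ext; simp]
  exact connected_top

end SimpleGraph

theorem sum_fin_two_pow (m : ℕ) : ∑ i : Fin m, 2 ^ (i : ℕ) = 2 ^ m - 1 := by
  rw [Fin.sum_univ_eq_sum_range (2 ^ ·), Nat.geomSum_eq le_rfl, Nat.div_one]

theorem exists_finset_sum_two_pow_eq {m t : ℕ} (ht : t < 2 ^ m) :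
    ∃ T : Finset (Fin m), ∑ i ∈ T, 2 ^ (i : ℕ) = t := by
  refine ⟨univ.filter fun i : Fin m => (i : ℕ) ∈ t.bitIndices, ?_⟩
  have hmap : (univ.filter fun i : Fin m => (i : ℕ) ∈ t.bitIndices).map Fin.valEmbedding =
      t.bitIndices.toFinset := by
    ext x
    simp only [mem_map, mem_filter, mem_univ, true_and, Fin.valEmbedding_apply,
      List.mem_toFinset]
    refine ⟨fun ⟨i, hi, hix⟩ => hix ▸ hi, fun hx => ⟨⟨x, ?_⟩, hx, rfl⟩⟩
    exact (Nat.pow_lt_pow_iff_right one_lt_two).1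
      ((Nat.two_pow_le_of_mem_bitIndices hx).trans_lt ht)
  conv_rhs => rw [← Finset.sum_toFinset_bitIndices_two_pow t, ← hmap, sum_map]
  rfl

theorem last_mem_iff_two_pow_le_sum {m : ℕ} (T : Finset (Fin (m + 1))) :
    Fin.last m ∈ T ↔ 2 ^ m ≤ ∑ i ∈ T, 2 ^ (i : ℕ) := by
  refine ⟨fun h => single_le_sum (f := fun i : Fin (m + 1) => 2 ^ (i : ℕ)) (by simp) h,
    fun h => ?_⟩
  by_contra hT
  refine h.not_gt ?_
  refine (sum_map T Fin.valEmbedding (2 ^ ·)).symm.trans_lt (Nat.geomSum_lt le_rfl ?_)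
  simp only [mem_map, Fin.valEmbedding_apply, forall_exists_index, and_imp]
  rintro _ i hi rfl
  exact Fin.val_lt_last (ne_of_mem_of_not_mem hi hT)

theorem exists_eq_mul_add_ite {s k N : ℕ} (hs : 0 < s) (hsk : s < k) (hk : k ≤ 2 * N * s + 1)
    (hne : k ≠ N * s + 1) :
    ∃ t j, 0 < t ∧ t < 2 * N ∧ 0 < j ∧ j ≤ s ∧ k = t * s + (if N ≤ t then 1 else 0) + j := by
  -- `e` is the extra `1` that `k` contains once `t ≥ N`.
  obtain ⟨e, he⟩ : ∃ e, e = if N * s + 1 < k then 1 else 0 := ⟨_, rfl⟩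
  have hsN : s ≤ N * s := Nat.le_mul_of_pos_left s (Nat.pos_of_ne_zero (by rintro rfl; omega))
  have hNs : 2 * N * s = 2 * (N * s) := by ring
  have hmod := Nat.div_add_mod (k - e - 1) s
  have hlt := Nat.mod_lt (k - e - 1) hs
  have hN : N ≤ (k - e - 1) / s ↔ N * s + 1 < k := by
    rw [Nat.le_div_iff_mul_le hs]
    split_ifs at he <;> omega
  refine ⟨(k - e - 1) / s, (k - e - 1) % s + 1, ?_, ?_, by omega, by omega, ?_⟩
  · refine Nat.div_pos ?_ hs
    split_ifs at he <;> omega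
  · rw [Nat.div_lt_iff_lt_mul hs]
    split_ifs at he <;> omega
  · rw [mul_comm, if_congr hN rfl rfl, ← he]
    split_ifs at he <;> omega

def joinColoring (m s : ℕ) (i : Fin (m + 1)) : ℕ :=
  2 ^ (i : ℕ) * s + if i = Fin.last m then 1 else 0

theorem sum_joinColoring (m s : ℕ) (T : Finset (Fin (m + 1))) :
    ∑ i ∈ T, joinColoring m s i =
      (∑ i ∈ T, 2 ^ (i : ℕ)) * s + if 2 ^ m ≤ ∑ i ∈ T, 2 ^ (i : ℕ) then 1 else 0 := by
  simp only [joinColoring, sum_add_distrib, sum_mul, sum_ite_eq', ← last_mem_iff_two_pow_le_sum]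

theorem sum_elim_joinColoring {β : Type*} [Fintype β] (m : ℕ) (f : β → ℕ) :
    ∑ v, Sum.elim (joinColoring m (∑ v, f v)) f v = 2 ^ (m + 1) * ∑ v, f v + 1 := by
  set s := ∑ v, f v
  have hpow : 2 ^ m ≤ 2 ^ (m + 1) - 1 := by
    rw [pow_succ]
    have := Nat.one_le_two_pow (n := m)
    omega
  have hs : s ≤ 2 ^ (m + 1) * s := Nat.le_mul_of_pos_left s (Nat.two_pow_pos _)
  rw [Fintype.sum_sum_type]
  simp only [Sum.elim_inl, Sum.elim_inr]
  rw [sum_joinColoring, sum_fin_two_pow, if_pos hpow, Nat.sub_one_mul]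
  omega

namespace IsICColoring

variable {α β : Type*} [Fintype α] [Fintype β]

theorem sum_le_two_pow_card {G : SimpleGraph α} {f : α → ℕ} (hf : IsICColoring G f) :
    ∑ v, f v ≤ 2 ^ Fintype.card α := by
  classical
  have hsub : Icc 1 (∑ v, f v) ⊆ univ.image fun S : Finset α => ∑ v ∈ S, f v := by
    intro k hk
    rw [mem_Icc] at hk
    obtain ⟨S, -, -, hS⟩ := hf.2 k hk.1 hk.2
    exact mem_image.2 ⟨S, mem_univ _, hS⟩
  simpa using (card_le_card hsub).trans card_image_le

theorem sum_le_ICIndex {G : SimpleGraph α} {f : α → ℕ} (hf : IsICColoring G f) :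
    ∑ v, f v ≤ ICIndex G :=
  le_csSup ⟨_, fun _ ⟨_, hg, hsum⟩ => hsum ▸ hg.sum_le_two_pow_card⟩ ⟨f, hf, rfl⟩

theorem join {H : SimpleGraph β} {f : β → ℕ} (hf : IsICColoring H f) (hs : 0 < ∑ v, f v)
    {m : ℕ} (G : SimpleGraph (Fin (m + 1))) :
    IsICColoring (graphJoin G H) (Sum.elim (joinColoring m (∑ v, f v)) f) := by
  set s := ∑ v, f v
  refine ⟨?_, fun k hk1 hk2 => ?_⟩
  · rintro (i | v)
    · exact Nat.add_pos_left (Nat.mul_pos (Nat.two_pow_pos _) hs) _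
    · exact hf.1 v
  rw [sum_elim_joinColoring] at hk2
  obtain hks | hks := le_or_gt k s
  · obtain ⟨U, hU, hUc, rfl⟩ := hf.2 k hk1 hks
    refine ⟨U.map .inr, hU.map, ?_, by simp⟩
    rw [coe_map]
    exact hUc.induce_inr_image
  obtain rfl | hne := eq_or_ne k (2 ^ m * s + 1)
  · refine ⟨{Sum.inl (Fin.last m)}, singleton_nonempty _, ?_, by simp [joinColoring]⟩
    rw [coe_singleton]
    exact connected_induce_singleton _ _
  obtain ⟨t, j, ht0, ht, hj0, hj, rfl⟩ :=
    exists_eq_mul_add_ite hs hks (by rwa [pow_succ, mul_comm _ 2] at hk2) hne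
  obtain ⟨T, rfl⟩ := exists_finset_sum_two_pow_eq (m := m + 1) (by rwa [pow_succ, mul_comm])
  obtain ⟨U, ⟨b, hb⟩, hUc, rfl⟩ := hf.2 j hj0 hj
  obtain ⟨a, ha⟩ : T.Nonempty := nonempty_of_sum_ne_zero ht0.ne'
  refine ⟨T.disjSum U, ⟨_, inl_mem_disjSum.2 ha⟩,
    graphJoin_induce_connected (inl_mem_disjSum.2 ha) (inr_mem_disjSum.2 hb), ?_⟩
  simp [sum_joinColoring]

end IsICColoring

theorem isICColoring_top_two_pow (n : ℕ) :
    IsICColoring (⊤ : SimpleGraph (Fin n)) fun i => 2 ^ (i : ℕ) := by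
  refine ⟨fun _ => Nat.two_pow_pos _, fun k hk1 hk2 => ?_⟩
  rw [sum_fin_two_pow] at hk2
  obtain ⟨T, rfl⟩ := exists_finset_sum_two_pow_eq (m := n) (t := k) (by omega)
  have hT : T.Nonempty := nonempty_of_sum_ne_zero (Nat.one_le_iff_ne_zero.1 hk1)
  exact ⟨T, hT, connected_top_induce (coe_nonempty.2 hT), rfl⟩

theorem nestedBound_pos {n : ℕ} (hn : 1 ≤ n) : ∀ ms : List ℕ, 0 < nestedBound ms n
  | [] => by
    have := Nat.pow_le_pow_right two_pos hn
    simp only [nestedBound]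
    omega
  | _ :: _ => Nat.succ_pos _

theorem exists_isICColoring_multiJoinGraph {n : ℕ} (hn : 1 ≤ n) :
    ∀ ms : List ℕ, (∀ m ∈ ms, 1 ≤ m) →
      ∃ f, IsICColoring (multiJoinGraph ms n) f ∧ ∑ v, f v = nestedBound ms n
  | [], _ => ⟨_, isICColoring_top_two_pow n, sum_fin_two_pow n⟩
  | m :: ms, hpos => by
    obtain ⟨f, hf, hsum⟩ :=
      exists_isICColoring_multiJoinGraph hn ms fun x hx => hpos x (List.mem_cons_of_mem _ hx)
    obtain ⟨m, rfl⟩ := Nat.exists_eq_add_of_le' (hpos _ List.mem_cons_self)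
    refine ⟨_, hf.join (hsum ▸ nestedBound_pos hn ms) ⊥, (sum_elim_joinColoring m f).trans ?_⟩
    rw [hsum, nestedBound]

theorem stmt_8_general (n : ℕ) (hn : 1 ≤ n)
    (ms : List ℕ) (hpos : ∀ x ∈ ms, 1 ≤ x) :
    nestedBound ms n ≤ ICIndex (multiJoinGraph ms n) := by
  obtain ⟨f, hf, hsum⟩ := exists_isICColoring_multiJoinGraph hn ms hpos
  exact hsum ▸ hf.sum_le_ICIndex

/-- For `ℓ ≥ 1`, `n ≥ 1` and integers `m₁ ≥ m₂ ≥ ⋯ ≥ m_ℓ ≥ 1`,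
`M(K_{1(n),m_ℓ,…,m₁}) ≥ 2^{m₁}(2^{m₂}(⋯(2^{m_ℓ}(2^n − 1) + 1)⋯) + 1) + 1`. -/
theorem stmt_8 (ℓ n : ℕ) (hℓ : 1 ≤ ℓ) (hn : 1 ≤ n)
    (ms : List ℕ) (hlen : ms.length = ℓ)
    (hsorted : ms.Chain' (· ≥ ·)) (hpos : ∀ x ∈ ms, 1 ≤ x) :
    nestedBound ms n ≤ ICIndex (multiJoinGraph ms n) :=
  stmt_8_general n hn ms hpos
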